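/- Fix β ∈ C_c^∞(ℝ) with supp β ⊂ (1/2, 2) and ρ ∈ C_c^∞(ℝ) with supp ρ ⊂ (1/4, 4) and ρ ≡ 1 on [1/2, 2]. For every positive integer N there is a constant C_N such that for all λ ≥ 1, all δ ∈ (0, 1/2), and all j ∈ ℤ with 2^j ≥ 1, the kernel K_j(x) = (2π)⁻² ∫_{ℝ²} m_j(|ξ|)(1 − ρ(|ξ|/λ)) e^{ix·ξ} dξ (an absolutely convergent integral) satisfies |K_j(x)| ≤ C_N (2^j λ)^{−N} for all x ∈ ℝ²; consequently the operator T_j − T̃_j, which is convolution with K_j, satisfies ‖(T_j − T̃_j) f‖_{L^∞(ℝ²)} ≤ C_N (2^j λ)^{−N} ‖f‖_{L¹(ℝ²)}. -/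

import Mathlib

open MeasureTheory RealInnerProductSpace
open scoped ENNReal

noncomputable section

/-- The plane `ℝ²`. -/
abbrev R2 := EuclideanSpace ℝ (Fin 2)

/-- The symbol of the dyadic-in-time resolvent piece:
`m_j(τ) = (i(λ+iδ))⁻¹ ∫₀^∞ β(2^{−j}t) e^{itλ − tδ} cos(tτ) dt`. -/
noncomputable def msym (β : ℝ → ℝ) (lam δ : ℝ) (j : ℤ) (τ : ℝ) : ℂ :=
  (Complex.I * ((lam : ℂ) + Complex.I * (δ : ℂ)))⁻¹ *
    ∫ t in Set.Ioi (0:ℝ),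
      (β ((2:ℝ) ^ (-j) * t) : ℂ) *
        Complex.exp (Complex.I * ((t * lam : ℝ) : ℂ) - ((t * δ : ℝ) : ℂ)) *
        Complex.cos (((t * τ : ℝ) : ℂ))

/-- The kernel `K_j(x) = (2π)⁻² ∫ m_j(|ξ|)(1 − ρ(|ξ|/λ)) e^{ix·ξ} dξ` of the
frequency-non-localized part `T_j − T̃_j` of the dyadic resolvent piece. -/
noncomputable def Kker (β ρ : ℝ → ℝ) (lam δ : ℝ) (j : ℤ) (x : R2) : ℂ :=
  (((2 * Real.pi) ^ 2 : ℂ))⁻¹ *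
    ∫ ξ : R2, msym β lam δ j ‖ξ‖ * ((1 - ρ (‖ξ‖ / lam) : ℝ) : ℂ) *
      Complex.exp (Complex.I * ((⟪x, ξ⟫ : ℝ) : ℂ))

/-!
Writing `cos (tτ) = (e^{itτ} + e^{-itτ}) / 2`, the symbol `m_j(τ)` is, up to the factor
`(i(λ+iδ))⁻¹`, the average of the integrals `∫ a(t) e^{its} dt` at `s = λ ± τ`, where
`a(t) = β(2^{-j} t) e^{-δt}`. Integrating by parts `k` times (`𝓕 (a⁽ᵏ⁾) w = (2πiw)ᵏ 𝓕 a w`)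
bounds these by `|s|^{-k} ‖a⁽ᵏ⁾‖₁ ≲ |s|^{-k} 2^{j(1-k)}`. The constant is uniform in `δ ≥ 0`:
after rescaling `t = 2^j u` the damping factor becomes `e^{-εu}` with `ε = 2^j δ`, and on the
support `u ≥ 1/2` of `β` its derivatives obey `εᵐ e^{-εu} ≤ 2ᵐ m!`. Where `1 - ρ(|ξ|/λ) ≠ 0` we
have `|λ - |ξ|| ≥ (λ + |ξ|)/3`, so with `k = N + 3` the integrand of `K_j` is
`O((2^jλ)^{-N} (1 + |ξ|)^{-3})`, which is integrable on `ℝ²`. The `L¹ → L^∞` bound is the trivial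
estimate for integration against a bounded kernel.
-/

open Complex FourierTransform Set

lemma pow_mul_exp_neg_le_factorial {x : ℝ} (hx : 0 ≤ x) (m : ℕ) :
    x ^ m * Real.exp (-x) ≤ m.factorial := by
  have h := Real.pow_div_factorial_le_exp x hx m
  rw [div_le_iff₀ (by positivity)] at h
  calc x ^ m * Real.exp (-x) ≤ Real.exp x * m.factorial * Real.exp (-x) := by gcongr
    _ = m.factorial := by rw [mul_comm, ← mul_assoc, ← Real.exp_add]; simp

lemma pow_mul_exp_neg_mul_le {ε c u : ℝ} (hε : 0 ≤ ε) (hc : 0 < c) (hu : c ≤ u) (m : ℕ) :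
    ε ^ m * Real.exp (-ε * u) ≤ m.factorial / c ^ m := by
  rw [le_div_iff₀ (by positivity), neg_mul]
  calc ε ^ m * Real.exp (-(ε * u)) * c ^ m = (ε * c) ^ m * Real.exp (-(ε * u)) := by ring
    _ ≤ (ε * u) ^ m * Real.exp (-(ε * u)) := by gcongr
    _ ≤ m.factorial := pow_mul_exp_neg_le_factorial (mul_nonneg hε (hc.le.trans hu)) m

lemma norm_iteratedDeriv_ofReal_comp {g : ℝ → ℝ} {n : ℕ} (hg : ContDiff ℝ n g) (t : ℝ) :
    ‖iteratedDeriv n (fun t => (g t : ℂ)) t‖ = ‖iteratedDeriv n g t‖ := by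
  rw [← norm_iteratedFDeriv_eq_norm_iteratedDeriv, ← norm_iteratedFDeriv_eq_norm_iteratedDeriv]
  exact Complex.ofRealLI.norm_iteratedFDeriv_comp_left hg.contDiffAt le_rfl

lemma iteratedDeriv_eq_zero_of_notMem_tsupport {E : Type*} [NormedAddCommGroup E]
    [NormedSpace ℝ E] {f : ℝ → E} {u : ℝ} (hu : u ∉ tsupport f) (n : ℕ) :
    iteratedDeriv n f u = 0 := by
  rw [iteratedDeriv_eq_iteratedFDeriv,
    image_eq_zero_of_notMem_tsupport (fun h => hu (tsupport_iteratedFDeriv_subset n h))]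
  rfl

lemma HasCompactSupport.iteratedDeriv {E : Type*} [NormedAddCommGroup E] [NormedSpace ℝ E]
    {f : ℝ → E} (hf : HasCompactSupport f) (n : ℕ) : HasCompactSupport (iteratedDeriv n f) :=
  HasCompactSupport.intro' hf (isClosed_tsupport f)
    fun _ hu => iteratedDeriv_eq_zero_of_notMem_tsupport hu n

lemma integral_norm_iteratedDeriv_comp_mul_left {E : Type*} [NormedAddCommGroup E]
    [NormedSpace ℝ E] {f : ℝ → E} {n : ℕ} (hf : ContDiff ℝ n f) (c : ℝ) :
    ∫ t, ‖iteratedDeriv n (fun t => f (c * t)) t‖ =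
      |c⁻¹| * |c| ^ n * ∫ t, ‖iteratedDeriv n f t‖ := by
  rw [iteratedDeriv_comp_const_smul hf]
  simp only [norm_smul, norm_pow, Real.norm_eq_abs]
  rw [integral_const_mul, Measure.integral_comp_mul_left (fun t => ‖iteratedDeriv n f t‖),
    smul_eq_mul]
  ring

lemma integral_mul_cexp_eq_fourier (a : ℝ → ℂ) (s : ℝ) :
    ∫ t, a t * cexp (I * ((t * s : ℝ) : ℂ)) = 𝓕 a (-s / (2 * Real.pi)) := by
  rw [Real.fourier_real_eq_integral_exp_smul]
  congr 1 with t
  rw [smul_eq_mul, mul_comm]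
  congr 2
  push_cast
  field_simp

lemma abs_pow_mul_norm_integral_mul_cexp_le {a : ℝ → ℂ} (ha : ContDiff ℝ (⊤ : ℕ∞) a)
    (hac : HasCompactSupport a) (k : ℕ) (s : ℝ) :
    |s| ^ k * ‖∫ t, a t * cexp (I * ((t * s : ℝ) : ℂ))‖ ≤ ∫ t, ‖iteratedDeriv k a t‖ := by
  have hint : ∀ n : ℕ, Integrable (iteratedDeriv n a) := fun n =>
    (ha.continuous_iteratedDeriv n (by exact_mod_cast le_top)).integrable_of_hasCompactSupport
      (hac.iteratedDeriv n)
  have hF := congrFun (Real.fourier_iteratedDeriv (N := ⊤) (n := k) ha (fun n _ => hint n)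
    (by exact_mod_cast le_top)) (-s / (2 * Real.pi))
  have hfreq : ‖2 * (Real.pi : ℂ) * I * ((-s / (2 * Real.pi) : ℝ) : ℂ)‖ = |s| := by
    rw [show 2 * (Real.pi : ℂ) * I * ((-s / (2 * Real.pi) : ℝ) : ℂ) = -s * I by
      push_cast; field_simp]
    simp
  calc |s| ^ k * ‖∫ t, a t * cexp (I * ((t * s : ℝ) : ℂ))‖
      = ‖𝓕 (iteratedDeriv k a) (-s / (2 * Real.pi))‖ := by
        rw [hF, integral_mul_cexp_eq_fourier, norm_smul, norm_pow, hfreq]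
    _ ≤ ∫ t, ‖iteratedDeriv k a t‖ :=
        VectorFourier.norm_fourierIntegral_le_integral_norm _ _ _ _ _

lemma exists_bound_norm_iteratedDeriv_mul_exp_neg {β : ℝ → ℝ} (hβ : ContDiff ℝ (⊤ : ℕ∞) β)
    (hβc : HasCompactSupport β) {c : ℝ} (hc : 0 < c) (hβ_ge : tsupport β ⊆ Ici c) (n : ℕ) :
    ∃ B, ∀ ε, 0 ≤ ε → ∀ u, ‖iteratedDeriv n (fun u => β u * Real.exp (-ε * u)) u‖ ≤ B := by
  have hM : ∀ i, ∃ M, ∀ u, ‖iteratedFDeriv ℝ i β u‖ ≤ M := fun i =>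
    (hβc.iteratedFDeriv i).exists_bound_of_continuous
      (hβ.continuous_iteratedFDeriv (by exact_mod_cast le_top))
  choose M hM using hM
  refine ⟨∑ i ∈ Finset.range (n + 1), n.choose i * (M i * ((n - i).factorial / c ^ (n - i))),
    fun ε hε u => ?_⟩
  have hterm : ∀ i, ‖iteratedFDeriv ℝ i β u‖ *
      ‖iteratedFDeriv ℝ (n - i) (fun u => Real.exp (-ε * u)) u‖ ≤
        M i * ((n - i).factorial / c ^ (n - i)) := by
    intro i
    rw [norm_iteratedFDeriv_eq_norm_iteratedDeriv (f := fun u => Real.exp (-ε * u)),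
      iteratedDeriv_exp_const_mul, norm_mul,
      norm_pow, norm_neg, Real.norm_of_nonneg hε, Real.norm_of_nonneg (Real.exp_pos _).le]
    have hM0 : 0 ≤ M i := (norm_nonneg _).trans (hM i u)
    by_cases hu : u ∈ tsupport β
    · exact mul_le_mul (hM i u) (pow_mul_exp_neg_mul_le hε hc (hβ_ge hu) _) (by positivity) hM0
    · rw [image_eq_zero_of_notMem_tsupport fun h => hu (tsupport_iteratedFDeriv_subset i h),
        norm_zero, zero_mul]
      positivity
  rw [← norm_iteratedFDeriv_eq_norm_iteratedDeriv]
  have hexp : ContDiff ℝ (⊤ : ℕ∞) fun u => Real.exp (-ε * u) :=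
    Real.contDiff_exp.comp (contDiff_const.mul contDiff_id)
  refine (norm_iteratedFDeriv_mul_le hβ hexp u (by exact_mod_cast le_top)).trans
    (Finset.sum_le_sum fun i _ => ?_)
  rw [mul_assoc]
  exact mul_le_mul_of_nonneg_left (hterm i) (by positivity)

lemma exists_bound_integral_norm_iteratedDeriv_mul_exp_neg {β : ℝ → ℝ}
    (hβ : ContDiff ℝ (⊤ : ℕ∞) β) (hβc : HasCompactSupport β) {c : ℝ} (hc : 0 < c)
    (hβ_ge : tsupport β ⊆ Ici c) (n : ℕ) :
    ∃ B, 0 ≤ B ∧ ∀ ε, 0 ≤ ε →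
      ∫ u, ‖iteratedDeriv n (fun u => β u * Real.exp (-ε * u)) u‖ ≤ B := by
  obtain ⟨B, hB⟩ := exists_bound_norm_iteratedDeriv_mul_exp_neg hβ hβc hc hβ_ge n
  have hB0 : 0 ≤ B := (norm_nonneg _).trans (hB 0 le_rfl 0)
  refine ⟨B * volume.real (tsupport β), by positivity, fun ε hε => ?_⟩
  have hsupp : ∀ u ∉ tsupport β,
      ‖iteratedDeriv n (fun u => β u * Real.exp (-ε * u)) u‖ = 0 := fun u hu => by
    rw [norm_eq_zero]
    refine iteratedDeriv_eq_zero_of_notMem_tsupport (fun h => hu ?_) n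
    exact tsupport_mul_subset_left h
  rw [← setIntegral_eq_integral_of_forall_compl_eq_zero hsupp]
  refine (le_abs_self _).trans ?_
  rw [← Real.norm_eq_abs]
  refine norm_setIntegral_le_of_norm_le_const hβc.measure_lt_top fun u _ => ?_
  rw [norm_norm]
  exact hB ε hε u

def dyadicAmplitude (β : ℝ → ℝ) (p δ t : ℝ) : ℝ := β (p⁻¹ * t) * Real.exp (-δ * t)

lemma dyadicAmplitude_eq_comp (β : ℝ → ℝ) {p : ℝ} (hp : p ≠ 0) (δ : ℝ) :
    dyadicAmplitude β p δ = fun t => (fun u => β u * Real.exp (-(p * δ) * u)) (p⁻¹ * t) := by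
  ext t
  simp only [dyadicAmplitude]
  congr 2
  field_simp

lemma HasCompactSupport.dyadicAmplitude {β : ℝ → ℝ} (hβc : HasCompactSupport β) {p : ℝ}
    (hp : p ≠ 0) (δ : ℝ) : HasCompactSupport (dyadicAmplitude β p δ) := by
  rw [dyadicAmplitude_eq_comp β hp]
  exact (hβc.mul_right (f' := fun u => Real.exp (-(p * δ) * u))).comp_homeomorph
    (Homeomorph.mulLeft₀ p⁻¹ (inv_ne_zero hp))

lemma integral_norm_iteratedDeriv_dyadicAmplitude_le {β : ℝ → ℝ}
    (hβ : ContDiff ℝ (⊤ : ℕ∞) β) (hβc : HasCompactSupport β) {c : ℝ} (hc : 0 < c)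
    (hβ_ge : tsupport β ⊆ Ici c) (k : ℕ) :
    ∃ B, 0 ≤ B ∧ ∀ p, 0 < p → ∀ δ, 0 ≤ δ →
      ∫ t, ‖iteratedDeriv k (fun t => (dyadicAmplitude β p δ t : ℂ)) t‖ ≤ B * p * (p⁻¹) ^ k := by
  obtain ⟨B, hB0, hB⟩ := exists_bound_integral_norm_iteratedDeriv_mul_exp_neg hβ hβc hc hβ_ge k
  refine ⟨B, hB0, fun p hp δ hδ => ?_⟩
  have hb : ContDiff ℝ k (fun u => β u * Real.exp (-(p * δ) * u)) :=
    (hβ.mul (Real.contDiff_exp.comp (contDiff_const.mul contDiff_id))).of_le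
      (by exact_mod_cast le_top)
  have ha : ContDiff ℝ k (dyadicAmplitude β p δ) := by
    rw [dyadicAmplitude_eq_comp β hp.ne']
    exact hb.comp (contDiff_const.mul contDiff_id)
  simp_rw [norm_iteratedDeriv_ofReal_comp ha]
  rw [dyadicAmplitude_eq_comp β hp.ne', integral_norm_iteratedDeriv_comp_mul_left hb, inv_inv,
    abs_of_pos hp, abs_of_pos (inv_pos.2 hp)]
  calc p * p⁻¹ ^ k * ∫ t, ‖iteratedDeriv k (fun u => β u * Real.exp (-(p * δ) * u)) t‖
      ≤ p * p⁻¹ ^ k * B := by gcongr; exact hB _ (by positivity)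
    _ = B * p * p⁻¹ ^ k := by ring

lemma msym_eq_half_add_integral {β : ℝ → ℝ} (hβ : Continuous β) (hβc : HasCompactSupport β)
    (hβ_pos : tsupport β ⊆ Ioi 0) (lam δ : ℝ) (j : ℤ) (τ : ℝ) :
    msym β lam δ j τ = (I * (lam + I * δ))⁻¹ * (2⁻¹ *
      ((∫ t, (dyadicAmplitude β (2 ^ j) δ t : ℂ) * cexp (I * ((t * (lam + τ) : ℝ) : ℂ))) +
        ∫ t, (dyadicAmplitude β (2 ^ j) δ t : ℂ) * cexp (I * ((t * (lam - τ) : ℝ) : ℂ)))) := by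
  set a := dyadicAmplitude β (2 ^ j) δ
  have hp : (2 : ℝ) ^ j ≠ 0 := by positivity
  have hint : ∀ s : ℝ, Integrable fun t => (a t : ℂ) * cexp (I * ((t * s : ℝ) : ℂ)) := by
    intro s
    have ha : Continuous a :=
      (hβ.comp (continuous_const.mul continuous_id)).mul (by fun_prop)
    refine Continuous.integrable_of_hasCompactSupport (by fun_prop) ?_
    exact ((hβc.dyadicAmplitude hp δ).comp_left Complex.ofReal_zero).mul_right
  have hcos : ∀ t : ℝ, (β ((2 : ℝ) ^ (-j) * t) : ℂ) *
      cexp (I * ((t * lam : ℝ) : ℂ) - ((t * δ : ℝ) : ℂ)) * Complex.cos ((t * τ : ℝ) : ℂ) =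
      2⁻¹ * ((a t : ℂ) * cexp (I * ((t * (lam + τ) : ℝ) : ℂ)) +
        (a t : ℂ) * cexp (I * ((t * (lam - τ) : ℝ) : ℂ))) := by
    intro t
    simp only [a, dyadicAmplitude, zpow_neg, Complex.cos, Complex.ofReal_mul,
      Complex.ofReal_exp]
    push_cast
    have hexp : ∀ b s : ℂ, b * cexp (-δ * t) * cexp (I * (t * (lam + s))) =
        b * (cexp (I * (t * lam) - t * δ) * cexp (t * s * I)) := fun b s => by
      rw [mul_assoc, ← Complex.exp_add, ← Complex.exp_add]; ring_nf
    rw [hexp, sub_eq_add_neg (lam : ℂ), hexp,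
      show (t : ℂ) * -τ * I = -(t * τ) * I by ring]
    ring
  have hvanish : ∀ t ∉ Ioi (0 : ℝ), (β ((2 : ℝ) ^ (-j) * t) : ℂ) *
      cexp (I * ((t * lam : ℝ) : ℂ) - ((t * δ : ℝ) : ℂ)) * Complex.cos ((t * τ : ℝ) : ℂ) = 0 := by
    intro t ht
    rw [image_eq_zero_of_notMem_tsupport (f := β) fun h => ?_]
    · simp
    · have := hβ_pos h
      simp only [mem_Ioi, not_lt] at ht this
      nlinarith [zpow_pos (two_pos (α := ℝ)) (-j)]
  rw [msym, setIntegral_eq_integral_of_forall_compl_eq_zero hvanish]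
  simp_rw [hcos]
  rw [integral_const_mul, integral_add (hint _) (hint _)]

lemma norm_inv_I_mul_add_I_mul_le {lam : ℝ} (hlam : 0 < lam) (δ : ℝ) :
    ‖(I * ((lam : ℂ) + I * δ))⁻¹‖ ≤ lam⁻¹ := by
  rw [norm_inv, norm_mul, Complex.norm_I, one_mul]
  refine inv_anti₀ hlam ?_
  simpa using Complex.re_le_norm ((lam : ℂ) + I * δ)

lemma div_three_le_abs_sub {lam τ : ℝ}
    (hoff : ¬(lam / 2 ≤ τ ∧ τ ≤ 2 * lam)) : (lam + τ) / 3 ≤ |lam - τ| := by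
  rcases not_and_or.1 hoff with h | h
  · exact le_abs.2 (Or.inl (by linarith))
  · exact le_abs.2 (Or.inr (by linarith))

lemma exists_norm_msym_le {β : ℝ → ℝ} (hβ : ContDiff ℝ (⊤ : ℕ∞) β) (hβc : HasCompactSupport β)
    {c : ℝ} (hc : 0 < c) (hβ_ge : tsupport β ⊆ Ici c) (k : ℕ) :
    ∃ B, 0 ≤ B ∧ ∀ lam, 0 < lam → ∀ δ, 0 ≤ δ → ∀ (j : ℤ) (τ : ℝ), 0 ≤ τ →
      ¬(lam / 2 ≤ τ ∧ τ ≤ 2 * lam) →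
        ‖msym β lam δ j τ‖ ≤ B * (lam⁻¹ * 2 ^ j * ((2 ^ j * (lam + τ))⁻¹) ^ k) := by
  obtain ⟨B, hB0, hB⟩ := integral_norm_iteratedDeriv_dyadicAmplitude_le hβ hβc hc hβ_ge k
  refine ⟨3 ^ k * B, by positivity, fun lam hlam δ hδ j τ hτ hoff => ?_⟩
  rw [msym_eq_half_add_integral hβ.continuous hβc (hβ_ge.trans (Ici_subset_Ioi.2 hc)), norm_mul,
    norm_mul (2⁻¹ : ℂ), show ‖(2⁻¹ : ℂ)‖ = 2⁻¹ by norm_num]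
  set p : ℝ := 2 ^ j
  have hp : 0 < p := by positivity
  set a : ℝ → ℂ := fun t => (dyadicAmplitude β p δ t : ℂ)
  have ha : ContDiff ℝ (⊤ : ℕ∞) a := ofRealCLM.contDiff.comp
    ((hβ.comp (contDiff_const.mul contDiff_id)).mul
      (Real.contDiff_exp.comp (contDiff_const.mul contDiff_id)))
  have hac : HasCompactSupport a := (hβc.dyadicAmplitude hp.ne' δ).comp_left ofReal_zero
  have hosc : ∀ s : ℝ, (lam + τ) / 3 ≤ |s| →
      ‖∫ t, a t * cexp (I * ((t * s : ℝ) : ℂ))‖ ≤ (3 / (lam + τ)) ^ k * (B * p * p⁻¹ ^ k) := by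
    intro s hs
    have hs0 : 0 < |s| := lt_of_lt_of_le (by positivity) hs
    have hdecay := (abs_pow_mul_norm_integral_mul_cexp_le ha hac k s).trans (hB p hp δ hδ)
    calc ‖∫ t, a t * cexp (I * ((t * s : ℝ) : ℂ))‖
        = (|s| ^ k)⁻¹ * (|s| ^ k * ‖∫ t, a t * cexp (I * ((t * s : ℝ) : ℂ))‖) := by
          rw [← mul_assoc, inv_mul_cancel₀ (by positivity), one_mul]
      _ ≤ (((lam + τ) / 3) ^ k)⁻¹ * (B * p * p⁻¹ ^ k) := by gcongr
      _ = (3 / (lam + τ)) ^ k * (B * p * p⁻¹ ^ k) := by rw [← inv_pow, inv_div]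
  have hplus := hosc (lam + τ) (by rw [abs_of_pos (by positivity)]; linarith)
  have hminus := hosc (lam - τ) (div_three_le_abs_sub hoff)
  calc ‖(I * ((lam : ℂ) + I * δ))⁻¹‖ * (2⁻¹ * ‖(∫ t, a t * cexp (I * ((t * (lam + τ) : ℝ) : ℂ))) +
        ∫ t, a t * cexp (I * ((t * (lam - τ) : ℝ) : ℂ))‖)
      ≤ lam⁻¹ * (2⁻¹ * ((3 / (lam + τ)) ^ k * (B * p * p⁻¹ ^ k) +
          (3 / (lam + τ)) ^ k * (B * p * p⁻¹ ^ k))) := by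
        gcongr
        · exact norm_inv_I_mul_add_I_mul_le hlam δ
        · exact (norm_add_le _ _).trans (add_le_add hplus hminus)
    _ = 3 ^ k * B * (lam⁻¹ * p * ((p * (lam + τ))⁻¹) ^ k) := by
        rw [div_eq_mul_inv, mul_inv, mul_pow, mul_pow]
        ring

lemma integrable_inv_one_add_norm_pow {E : Type*} [NormedAddCommGroup E] [NormedSpace ℝ E]
    [FiniteDimensional ℝ E] [MeasurableSpace E] [BorelSpace E] (μ : Measure E)
    [μ.IsAddHaarMeasure] {n : ℕ} (hn : Module.finrank ℝ E < n) :
    Integrable (fun x : E => ((1 + ‖x‖) ^ n)⁻¹) μ := by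
  refine (integrable_one_add_norm (μ := μ) (r := n) (by exact_mod_cast hn)).congr
    (ae_of_all _ fun x => ?_)
  simp only
  rw [Real.rpow_neg (by positivity), Real.rpow_natCast]

lemma inv_mul_mul_inv_pow_le {p lam τ : ℝ} (hp : 1 ≤ p) (hlam : 1 ≤ lam) (hτ : 0 ≤ τ) (N : ℕ) :
    lam⁻¹ * p * ((p * (lam + τ))⁻¹) ^ (N + 3) ≤ ((p * lam) ^ N)⁻¹ * ((1 + τ) ^ 3)⁻¹ := by
  calc lam⁻¹ * p * ((p * (lam + τ))⁻¹) ^ (N + 3)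
      = lam⁻¹ * (p ^ (N + 2))⁻¹ * ((lam + τ) ^ N)⁻¹ * ((lam + τ) ^ 3)⁻¹ := by
        rw [inv_pow, mul_pow, pow_add (lam + τ), pow_succ p (N + 2)]
        field_simp
    _ ≤ 1 * (p ^ N)⁻¹ * (lam ^ N)⁻¹ * ((1 + τ) ^ 3)⁻¹ := by
        gcongr
        · exact inv_le_one_of_one_le₀ hlam
        · omega
        · linarith
    _ = ((p * lam) ^ N)⁻¹ * ((1 + τ) ^ 3)⁻¹ := by rw [mul_pow, mul_inv]; ring

lemma norm_Kker_le {β ρ : ℝ → ℝ} {lam δ : ℝ} {j : ℤ} (hlam : 0 < lam)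
    (hρone : ∀ t ∈ Icc (1/2 : ℝ) 2, ρ t = 1) {A M : ℝ} (hA : ∀ t, |1 - ρ t| ≤ A) (hM : 0 ≤ M)
    (hm : ∀ τ, 0 ≤ τ → ¬(lam / 2 ≤ τ ∧ τ ≤ 2 * lam) →
      ‖msym β lam δ j τ‖ ≤ M * ((1 + τ) ^ 3)⁻¹) (x : R2) :
    ‖Kker β ρ lam δ j x‖ ≤ A * M * ∫ ξ : R2, ((1 + ‖ξ‖) ^ 3)⁻¹ := by
  have hA0 : 0 ≤ A := (abs_nonneg _).trans (hA 0)
  have hpref : ‖(((2 * Real.pi) ^ 2 : ℂ))⁻¹‖ ≤ 1 := by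
    rw [norm_inv]
    refine inv_le_one_of_one_le₀ ?_
    rw [norm_pow, norm_mul, Complex.norm_ofNat, Complex.norm_real, Real.norm_of_nonneg
      Real.pi_pos.le]
    nlinarith [Real.pi_gt_three]
  have hpt : ∀ ξ : R2, ‖msym β lam δ j ‖ξ‖ * ((1 - ρ (‖ξ‖ / lam) : ℝ) : ℂ) *
      cexp (I * ((⟪x, ξ⟫ : ℝ) : ℂ))‖ ≤ A * M * ((1 + ‖ξ‖) ^ 3)⁻¹ := by
    intro ξ
    rw [norm_mul, norm_mul, norm_exp_I_mul_ofReal, mul_one, Complex.norm_real, Real.norm_eq_abs]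
    by_cases hone : ρ (‖ξ‖ / lam) = 1
    · rw [hone, sub_self, abs_zero, mul_zero]
      positivity
    have hoff : ¬(lam / 2 ≤ ‖ξ‖ ∧ ‖ξ‖ ≤ 2 * lam) := fun h => hone (hρone _
      ⟨by rw [le_div_iff₀ hlam]; linarith, by rw [div_le_iff₀ hlam]; linarith⟩)
    calc ‖msym β lam δ j ‖ξ‖‖ * |1 - ρ (‖ξ‖ / lam)| ≤ M * ((1 + ‖ξ‖) ^ 3)⁻¹ * A :=
          mul_le_mul (hm _ (norm_nonneg _) hoff) (hA _) (abs_nonneg _) (by positivity)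
      _ = A * M * ((1 + ‖ξ‖) ^ 3)⁻¹ := by ring
  have hint : Integrable (fun ξ : R2 => ((1 + ‖ξ‖) ^ 3)⁻¹) :=
    integrable_inv_one_add_norm_pow volume (by simp)
  rw [Kker, norm_mul, ← integral_const_mul]
  calc _ ≤ 1 * ∫ ξ : R2, A * M * ((1 + ‖ξ‖) ^ 3)⁻¹ :=
        mul_le_mul hpref (norm_integral_le_of_norm_le (hint.const_mul _) (ae_of_all _ hpt))
          (norm_nonneg _) zero_le_one
    _ = _ := one_mul _

lemma eLpNorm_top_integral_mul_le {α γ 𝕜 : Type*} [RCLike 𝕜] [MeasurableSpace α]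
    [MeasurableSpace γ] {μ : Measure α} {ν : Measure γ} {K : γ → α → 𝕜} {M : ℝ} (hM : 0 ≤ M)
    (hK : ∀ x y, ‖K x y‖ ≤ M) {f : α → 𝕜} (hf : Integrable f μ) :
    eLpNorm (fun x => ∫ y, K x y * f y ∂μ) ∞ ν ≤ ENNReal.ofReal M * eLpNorm f 1 μ := by
  have hbd : ∀ x, ‖∫ y, K x y * f y ∂μ‖ ≤ M * ∫ y, ‖f y‖ ∂μ := fun x => by
    rw [← integral_const_mul]
    refine norm_integral_le_of_norm_le (hf.norm.const_mul M) (ae_of_all _ fun y => ?_)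
    rw [norm_mul]
    exact mul_le_mul_of_nonneg_right (hK x y) (norm_nonneg _)
  refine (eLpNorm_le_of_ae_bound (ae_of_all _ hbd)).trans_eq ?_
  rw [ENNReal.toReal_top, inv_zero, ENNReal.rpow_zero, one_mul, ENNReal.ofReal_mul hM,
    ofReal_integral_norm_eq_lintegral_enorm hf, eLpNorm_one_eq_lintegral_enorm]

/-- Frequencies away from `|ξ| ∼ λ` contribute only `O((2^jλ)^{−∞})`:
`|K_j(x)| ≤ C_N (2^j λ)^{−N}` for all `x`, and consequently the operator `T_j − T̃_j`,
which is convolution with `K_j`, maps `L¹ → L^∞` with norm `≤ C_N (2^j λ)^{−N}`. -/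
theorem statement10
    (β : ℝ → ℝ) (hβ : ContDiff ℝ (⊤ : ℕ∞) β)
    (hβsupp : tsupport β ⊆ Set.Ioo (1/2 : ℝ) 2)
    (ρ : ℝ → ℝ) (hρ : ContDiff ℝ (⊤ : ℕ∞) ρ)
    (hρsupp : tsupport ρ ⊆ Set.Ioo (1/4 : ℝ) 4)
    (hρone : ∀ t ∈ Set.Icc (1/2 : ℝ) 2, ρ t = 1) :
    ∀ N : ℕ, 0 < N → ∃ C : ℝ, 0 < C ∧
      ∀ lam : ℝ, 1 ≤ lam → ∀ δ : ℝ, 0 < δ → δ < 1/2 →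
        ∀ j : ℤ, 1 ≤ (2:ℝ) ^ j →
          (∀ x : R2, ‖Kker β ρ lam δ j x‖ ≤ C * (((2:ℝ) ^ j * lam) ^ N)⁻¹) ∧
          (∀ f : R2 → ℂ, MemLp f 1 volume →
            eLpNorm (fun x : R2 => ∫ y : R2, Kker β ρ lam δ j (x - y) * f y) ⊤ volume
              ≤ ENNReal.ofReal (C * (((2:ℝ) ^ j * lam) ^ N)⁻¹) * eLpNorm f 1 volume) := by
  intro N _
  have hβc : HasCompactSupport β :=
    isCompact_Icc.of_isClosed_subset (isClosed_tsupport β) (hβsupp.trans Ioo_subset_Icc_self)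
  have hρc : HasCompactSupport ρ :=
    isCompact_Icc.of_isClosed_subset (isClosed_tsupport ρ) (hρsupp.trans Ioo_subset_Icc_self)
  have hβ_ge : tsupport β ⊆ Ici (1/2) :=
    hβsupp.trans (Ioo_subset_Icc_self.trans Icc_subset_Ici_self)
  obtain ⟨B, hB0, hB⟩ := exists_norm_msym_le hβ hβc one_half_pos hβ_ge (N + 3)
  obtain ⟨Mρ, hMρ⟩ := hρc.exists_bound_of_continuous hρ.continuous
  have hA : ∀ t, |1 - ρ t| ≤ 1 + Mρ := fun t =>
    (abs_sub _ _).trans (by simpa using hMρ t)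
  have hA0 : 0 ≤ 1 + Mρ := (abs_nonneg _).trans (hA 0)
  set V := ∫ ξ : R2, ((1 + ‖ξ‖) ^ 3)⁻¹
  have hV : 0 ≤ V := integral_nonneg fun _ => by positivity
  refine ⟨(1 + Mρ) * B * V + 1, by positivity, fun lam hlam δ hδ _ j hj => ?_⟩
  set R := (((2 : ℝ) ^ j * lam) ^ N)⁻¹
  have hR : 0 ≤ R := by positivity
  have hK : ∀ x, ‖Kker β ρ lam δ j x‖ ≤ ((1 + Mρ) * B * V + 1) * R := fun x => by
    refine (norm_Kker_le (by linarith) hρone hA (mul_nonneg hB0 hR) (fun τ hτ hoff => ?_)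
      x).trans ?_
    · exact ((hB lam (by linarith) δ hδ.le j τ hτ hoff).trans (mul_le_mul_of_nonneg_left
        (inv_mul_mul_inv_pow_le hj hlam hτ N) hB0)).trans_eq (mul_assoc _ _ _).symm
    · nlinarith
  exact ⟨hK, fun f hf => eLpNorm_top_integral_mul_le (by positivity) (fun x y => hK (x - y))
    (memLp_one_iff_integrable.1 hf)⟩
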